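/- (Universal matrix Capelli identity for U(gl_N).) Let X and D be the N×N matrices of multiplication and differentiation operators on the polynomial ring in variables x_i^j, and set L = XD. Then for every integer n ≥ 1, in Mat_N(ℂ)^{⊗n} ⊗ W_N, one has L_1 (L_2 − j_2) (L_3 − j_3) ⋯ (L_n − j_n) = X_1 X_2 ⋯ X_n D_1 D_2 ⋯ D_n, where j_k = Σ_{i=1}^{k−1} P_{ik} are the Jucys–Murphy matrices. -/

import Mathlib

open Matrix
open scoped Classical

noncomputable section

/-- The Weyl algebra `W_N`: the algebra of ℂ-linear endomorphisms of the
polynomial ring `ℂ[x_i^j : 1 ≤ i,j ≤ N]`, with variables indexed by pairs `(i,j)`. -/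
abbrev Wn (N : ℕ) : Type := Module.End ℂ (MvPolynomial (Fin N × Fin N) ℂ)

/-- The matrix `X = ||x_i^j||` whose `(i,j)` entry is the operator of
multiplication by the variable `x_i^j`. -/
def Xop (N : ℕ) : Matrix (Fin N) (Fin N) (Wn N) := fun i j =>
  LinearMap.mulLeft ℂ (MvPolynomial.X (i, j))

/-- The matrix `D = ||∂/∂x_j^i||` whose `(i,j)` entry is the partial derivative
operator `∂/∂x_j^i`. -/
def Dop (N : ℕ) : Matrix (Fin N) (Fin N) (Wn N) := fun i j =>
  (MvPolynomial.pderiv (j, i)).toLinearMap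

/-- For an `N×N` matrix `A` over `U`, the element `A_i` of
`Mat_N(ℂ)^{⊗n} ⊗ U` (identified with matrices over `U` indexed by `n`-tuples
of indices) acting as `A` in the `i`-th tensor factor (0-based) and as the
identity in all other factors.  (If `i` is out of range it is the identity.) -/
def tensorEmb {U : Type*} [Ring U] (N n : ℕ) (i : ℕ) (A : Matrix (Fin N) (Fin N) U) :
    Matrix (Fin n → Fin N) (Fin n → Fin N) U := fun a b =>
  if h : i < n then
    if ∀ k : Fin n, (k : ℕ) ≠ i → a k = b k then A (a ⟨i, h⟩) (b ⟨i, h⟩) else 0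
  else if a = b then 1 else 0

/-- The permutation matrix `P_{ik} ∈ Mat_N(ℂ)^{⊗n} ⊗ U` exchanging the `i`-th
and `k`-th tensor factors (0-based); for `n = 2` it has matrix elements
`P_{kl}^{mn} = δ_k^n δ_l^m`. -/
def permM {U : Type*} [Ring U] (N n : ℕ) (i k : ℕ) :
    Matrix (Fin n → Fin N) (Fin n → Fin N) U := fun a b =>
  if h : i < n ∧ k < n then
    if a = b ∘ (Equiv.swap (⟨i, h.1⟩ : Fin n) ⟨k, h.2⟩) then 1 else 0
  else if a = b then 1 else 0

/-- The Jucys–Murphy matrix `j_k = Σ_{i=1}^{k-1} P_{ik}` (here 0-based: the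
`k`-th JM matrix is the sum of `P_{ik}` over `i < k`; for `k = 0` it is `0`). -/
def jmM (N n : ℕ) (k : ℕ) : Matrix (Fin n → Fin N) (Fin n → Fin N) ℂ :=
  ∑ i ∈ Finset.range k, permM N n i k

/-! Write `Q_m = D_1 ⋯ D_m`. Since the `∂/∂x_j^i` commute and `[∂/∂x_j^i, x_k^l] = δ_{jk} δ_{il}`,
the `D_k` commute, `D_i X_k = X_k D_i + P_{ik}` for `i ≠ k`, `P_{ik} D_k = D_i P_{ik}`, and
`P_{ik}` commutes with `D_j` for `j ∉ {i, k}`. Moving `X_r` to the left through `Q_{r-1}`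
produces one extra term `D_1 ⋯ P_{ir} ⋯ D_{r-1}` for each `i < r`, and right multiplication by
`D_r` turns it into `Q_{r-1} P_{ir}`. Hence `Q_{r-1} (L_r - j_r) = X_r Q_r`, and induction on the
number of factors gives `L_1 (L_2 - j_2) ⋯ (L_n - j_n) = X_1 ⋯ X_n Q_n`. -/

namespace MvPolynomial

variable {σ R : Type*} [CommRing R]

theorem commute_pderiv (i j : σ) :
    Commute (pderiv (R := R) i).toLinearMap (pderiv j).toLinearMap := by
  have h : ⁅pderiv (R := R) i, pderiv j⁆ = 0 :=
    derivation_ext fun k => by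
      rw [Derivation.commutator_apply, pderiv_X, pderiv_X, Pi.single_apply, Pi.single_apply]
      split_ifs <;> simp
  rw [commute_iff_lie_eq, ← Derivation.commutator_coe_linear_map, h]
  rfl

theorem pderiv_mul_mulLeft_X (i j : σ) :
    (pderiv i).toLinearMap * LinearMap.mulLeft R (X j) =
      LinearMap.mulLeft R (X j) * (pderiv i).toLinearMap + if i = j then 1 else 0 := by
  ext p
  by_cases h : i = j <;> simp [pderiv_X, h]

end MvPolynomial

structure CapelliRelations {R : Type*} [Ring R] (n : ℕ) (x d : ℕ → R) (p : ℕ → ℕ → R) :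
    Prop where
  commute_d : ∀ i < n, ∀ k < n, Commute (d i) (d k)
  d_mul_x : ∀ i < n, ∀ k < n, i ≠ k → d i * x k = x k * d i + p i k
  p_mul_d_right : ∀ i < n, ∀ k < n, p i k * d k = d i * p i k
  commute_p_d : ∀ i < n, ∀ j < n, ∀ k < n, j ≠ i → j ≠ k → Commute (p i k) (d j)

namespace CapelliRelations

variable {R : Type*} [Ring R] {n : ℕ} {x d : ℕ → R} {p : ℕ → ℕ → R}

theorem prod_d_mul_x_mul_d (h : CapelliRelations n x d p) {m r : ℕ} (hmr : m ≤ r) (hr : r < n) :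
    ((List.range m).map d).prod * x r * d r =
      x r * ((List.range m).map d).prod * d r +
        ((List.range m).map d).prod * ∑ i ∈ Finset.range m, p i r := by
  induction m with
  | zero => simp
  | succ m ih =>
    have hm : m < n := by omega
    have hmr' : m ≠ r := by omega
    have hS : Commute (∑ i ∈ Finset.range m, p i r) (d m) :=
      Commute.sum_left _ _ _ fun i hi => by
        have hi' := Finset.mem_range.mp hi
        exact h.commute_p_d i (by omega) m hm r hr (by omega) hmr'
    rw [List.prod_range_succ, Finset.sum_range_succ]
    set Q := ((List.range m).map d).prod
    set S := ∑ i ∈ Finset.range m, p i r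
    calc Q * d m * x r * d r = Q * (d m * x r) * d r := by simp only [mul_assoc]
      _ = Q * x r * (d m * d r) + Q * (p m r * d r) := by
        rw [h.d_mul_x m hm r hr hmr']; noncomm_ring
      _ = Q * x r * d r * d m + Q * d m * p m r := by
        rw [(h.commute_d m hm r hr).eq, h.p_mul_d_right m hm r hr]; noncomm_ring
      _ = x r * Q * (d r * d m) + Q * (S * d m) + Q * d m * p m r := by
        rw [ih (by omega)]; noncomm_ring
      _ = x r * (Q * d m) * d r + Q * d m * (S + p m r) := by
        rw [(h.commute_d r hr m hm).eq, hS.eq]; noncomm_ring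

theorem prod_x_mul_d_sub_sum (h : CapelliRelations n x d p) {m : ℕ} (hm : m ≤ n) :
    ((List.range m).map fun k => x k * d k - ∑ i ∈ Finset.range k, p i k).prod =
      ((List.range m).map x).prod * ((List.range m).map d).prod := by
  induction m with
  | zero => simp
  | succ m ih =>
    rw [List.prod_range_succ, ih (by omega), List.prod_range_succ, List.prod_range_succ]
    set Q := ((List.range m).map d).prod
    calc ((List.range m).map x).prod * Q * (x m * d m - ∑ i ∈ Finset.range m, p i m)
        = ((List.range m).map x).prod * (Q * x m * d m - Q * ∑ i ∈ Finset.range m, p i m) := by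
          noncomm_ring
      _ = ((List.range m).map x).prod * x m * (Q * d m) := by
          rw [h.prod_d_mul_x_mul_d le_rfl hm, add_sub_cancel_right]; noncomm_ring

end CapelliRelations

theorem Fintype.sum_eq_sum_update_of_eq_zero {ι β M : Type*} [Fintype ι] [DecidableEq ι]
    [Fintype β] [AddCommMonoid M] (a : ι → β) (i : ι) (f : (ι → β) → M)
    (hf : ∀ c, ¬ (∀ k, k ≠ i → a k = c k) → f c = 0) :
    ∑ c, f c = ∑ m, f (Function.update a i m) := by
  rw [← Finset.sum_fiberwise Finset.univ (fun c => c i) f]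
  refine Finset.sum_congr rfl fun m _ => Finset.sum_eq_single_of_mem _ (by simp) fun c hc hne => ?_
  refine hf c fun hac => hne ?_
  rw [Function.eq_update_iff]
  exact ⟨(Finset.mem_filter.mp hc).2, fun k hk => (hac k hk).symm⟩

theorem Function.eq_comp_swap_iff {α β : Type*} [DecidableEq α] {a b : α → β} {i k : α} :
    a = b ∘ Equiv.swap i k ↔ a i = b k ∧ a k = b i ∧ ∀ l, l ≠ i → l ≠ k → a l = b l := by
  refine ⟨fun hab => ?_, fun ⟨hi, hk, hl⟩ => funext fun l => ?_⟩
  · subst hab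
    refine ⟨by simp, by simp, fun l hli hlk => by simp [Equiv.swap_apply_of_ne_of_ne hli hlk]⟩
  · by_cases hli : l = i
    · subst hli; simpa using hi
    · by_cases hlk : l = k
      · subst hlk; simpa using hk
      · simpa [Equiv.swap_apply_of_ne_of_ne hli hlk] using hl l hli hlk

namespace TensorFactor

variable {U : Type*} [Ring U] {N n : ℕ}

def embedAt (i : Fin n) (A : Matrix (Fin N) (Fin N) U) :
    Matrix (Fin n → Fin N) (Fin n → Fin N) U := fun a b =>
  if ∀ k, k ≠ i → a k = b k then A (a i) (b i) else 0

def swapAt (N : ℕ) (i k : Fin n) : Matrix (Fin n → Fin N) (Fin n → Fin N) U := fun a b =>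
  if a = b ∘ Equiv.swap i k then 1 else 0

theorem embedAt_update_apply (i : Fin n) (A : Matrix (Fin N) (Fin N) U)
    (a b : Fin n → Fin N) (m : Fin N) :
    embedAt i A (Function.update a i m) b =
      if ∀ k, k ≠ i → a k = b k then A m (b i) else 0 := by
  simp only [embedAt, Function.update_self]
  refine if_congr (forall_congr' fun k => imp_congr_right fun hk => ?_) rfl rfl
  rw [Function.update_of_ne hk]

theorem embedAt_apply_update (i : Fin n) (A : Matrix (Fin N) (Fin N) U)
    (a : Fin n → Fin N) (m : Fin N) :
    embedAt i A a (Function.update a i m) = A (a i) m := by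
  rw [embedAt, if_pos fun k hk => (Function.update_of_ne hk _ _).symm, Function.update_self]

theorem embedAt_mul_apply (i : Fin n) (A : Matrix (Fin N) (Fin N) U)
    (M : Matrix (Fin n → Fin N) (Fin n → Fin N) U) (a b : Fin n → Fin N) :
    (embedAt i A * M) a b = ∑ m, A (a i) m * M (Function.update a i m) b := by
  rw [Matrix.mul_apply, Fintype.sum_eq_sum_update_of_eq_zero a i _ fun c hc => by
    rw [embedAt, if_neg hc, zero_mul]]
  simp only [embedAt_apply_update]

theorem embedAt_mul_embedAt (i : Fin n) (A B : Matrix (Fin N) (Fin N) U) :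
    embedAt i A * embedAt i B = embedAt i (A * B) := by
  ext a b
  rw [embedAt_mul_apply]
  simp only [embedAt_update_apply, mul_ite, mul_zero]
  split_ifs with h
  · rw [embedAt, if_pos h, Matrix.mul_apply]
  · rw [embedAt, if_neg h, Finset.sum_const_zero]

theorem embedAt_mul_embedAt_apply_of_ne {i k : Fin n} (h : i ≠ k)
    (A B : Matrix (Fin N) (Fin N) U) (a b : Fin n → Fin N) :
    (embedAt i A * embedAt k B) a b =
      if ∀ l, l ≠ i → l ≠ k → a l = b l then A (a i) (b i) * B (a k) (b k) else 0 := by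
  have hupd : ∀ m, embedAt k B (Function.update a i m) b =
      if m = b i ∧ ∀ l, l ≠ i → l ≠ k → a l = b l then B (a k) (b k) else 0 := by
    intro m
    simp only [embedAt, Function.update_of_ne h.symm]
    congr 1
    refine propext ⟨fun hc => ⟨?_, fun l hli hlk => ?_⟩, fun ⟨hm, hc⟩ l hlk => ?_⟩
    · simpa using hc i h
    · simpa [Function.update_of_ne hli] using hc l hlk
    · by_cases hli : l = i
      · subst hli; simpa using hm
      · simpa [Function.update_of_ne hli] using hc l hli hlk
  rw [embedAt_mul_apply]
  simp only [hupd, mul_ite, mul_zero]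
  split_ifs with hc
  · rw [Finset.sum_eq_single_of_mem (b i) (Finset.mem_univ _) fun m _ hm => if_neg fun h => hm h.1,
      if_pos ⟨rfl, hc⟩]
  · exact Finset.sum_eq_zero fun m _ => if_neg fun h => hc h.2

theorem commute_embedAt_of_ne {i k : Fin n} (h : i ≠ k) {A B : Matrix (Fin N) (Fin N) U}
    (hAB : ∀ p q r s, Commute (A p q) (B r s)) : Commute (embedAt i A) (embedAt k B) := by
  ext a b
  rw [embedAt_mul_embedAt_apply_of_ne h, embedAt_mul_embedAt_apply_of_ne h.symm,
    (hAB _ _ _ _).eq]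
  exact if_congr (forall_congr' fun l => imp.swap) rfl rfl

theorem embedAt_mul_embedAt_eq_add_swapAt {i k : Fin n} (h : i ≠ k)
    {A B : Matrix (Fin N) (Fin N) U}
    (hAB : ∀ p q r s, A p q * B r s = B r s * A p q + if q = r ∧ p = s then 1 else 0) :
    embedAt i A * embedAt k B = embedAt k B * embedAt i A + swapAt N i k := by
  ext a b
  rw [Matrix.add_apply, embedAt_mul_embedAt_apply_of_ne h, embedAt_mul_embedAt_apply_of_ne h.symm,
    swapAt]
  simp only [Function.eq_comp_swap_iff]
  by_cases hc : ∀ l, l ≠ i → l ≠ k → a l = b l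
  · rw [if_pos hc, if_pos fun l hlk hli => hc l hli hlk, hAB]
    congr 2
    exact propext ⟨fun ⟨h1, h2⟩ => ⟨h2, h1.symm, hc⟩, fun ⟨h1, h2, _⟩ => ⟨h2.symm, h1⟩⟩
  · rw [if_neg hc, if_neg fun hc' => hc fun l hli hlk => hc' l hlk hli, if_neg fun h => hc h.2.2,
      add_zero]

theorem swapAt_mul (i k : Fin n) (M : Matrix (Fin n → Fin N) (Fin n → Fin N) U) :
    swapAt N i k * M = M.submatrix (· ∘ Equiv.swap i k) id := by
  have hswap : ∀ a c : Fin n → Fin N, a = c ∘ Equiv.swap i k ↔ a ∘ Equiv.swap i k = c :=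
    fun a c => by constructor <;> rintro rfl <;> ext <;> simp
  ext a b
  simp [Matrix.mul_apply, swapAt, hswap]

theorem mul_swapAt (i k : Fin n) (M : Matrix (Fin n → Fin N) (Fin n → Fin N) U) :
    M * swapAt N i k = M.submatrix id (· ∘ Equiv.swap i k) := by
  ext a b
  simp [Matrix.mul_apply, swapAt]

theorem swapAt_mul_embedAt (i k j : Fin n) (A : Matrix (Fin N) (Fin N) U) :
    swapAt N i k * embedAt j A = embedAt (Equiv.swap i k j) A * swapAt N i k := by
  ext a b
  rw [swapAt_mul, mul_swapAt, Matrix.submatrix_apply, Matrix.submatrix_apply]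
  simp only [embedAt, Function.comp_apply, Equiv.swap_apply_self]
  refine if_congr ⟨fun h l hl => ?_, fun h l hl => ?_⟩ rfl rfl
  · simpa using h (Equiv.swap i k l) fun hl' => hl (by rw [← hl', Equiv.swap_apply_self])
  · simpa using h (Equiv.swap i k l) fun hl' => hl ((Equiv.swap i k).injective hl')

end TensorFactor

theorem commute_Dop_apply (N : ℕ) (p q r s : Fin N) : Commute (Dop N p q) (Dop N r s) :=
  MvPolynomial.commute_pderiv _ _

theorem Dop_apply_mul_Xop_apply (N : ℕ) (p q r s : Fin N) :
    Dop N p q * Xop N r s = Xop N r s * Dop N p q + if q = r ∧ p = s then 1 else 0 := by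
  simp only [Dop, Xop, MvPolynomial.pderiv_mul_mulLeft_X, Prod.mk.injEq]

section TensorEmb

open TensorFactor

variable {U : Type*} [Ring U] {N n : ℕ}

theorem tensorEmb_eq_embedAt {i : ℕ} (h : i < n) (A : Matrix (Fin N) (Fin N) U) :
    tensorEmb N n i A = embedAt ⟨i, h⟩ A := by
  ext a b
  simp only [tensorEmb, dif_pos h, embedAt, ne_eq, Fin.ext_iff]

theorem tensorEmb_of_le {i : ℕ} (h : n ≤ i) (A : Matrix (Fin N) (Fin N) U) :
    tensorEmb N n i A = 1 := by
  ext a b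
  simp [tensorEmb, dif_neg (not_lt.mpr h), Matrix.one_apply]

theorem tensorEmb_mul (i : ℕ) (A B : Matrix (Fin N) (Fin N) U) :
    tensorEmb N n i (A * B) = tensorEmb N n i A * tensorEmb N n i B := by
  rcases lt_or_ge i n with h | h
  · simp only [tensorEmb_eq_embedAt h, embedAt_mul_embedAt]
  · simp only [tensorEmb_of_le h, mul_one]

theorem permM_eq_swapAt {i k : ℕ} (hi : i < n) (hk : k < n) :
    (permM N n i k : Matrix _ _ U) = swapAt N ⟨i, hi⟩ ⟨k, hk⟩ := by
  ext a b
  simp only [permM, dif_pos (And.intro hi hk), swapAt]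

theorem map_permM {V : Type*} [Ring V] (f : U →+* V) (i k : ℕ) :
    (permM N n i k : Matrix _ _ U).map f = permM N n i k := by
  ext a b
  simp only [Matrix.map_apply, permM]
  split_ifs <;> simp

theorem map_jmM (f : ℂ →+* U) (k : ℕ) :
    (jmM N n k).map f = ∑ i ∈ Finset.range k, permM N n i k := by
  rw [jmM, ← f.mapMatrix_apply, map_sum]
  simp only [f.mapMatrix_apply, map_permM]

end TensorEmb

open TensorFactor in
theorem capelliRelations_tensorEmb (N n : ℕ) :
    CapelliRelations n (fun k => tensorEmb N n k (Xop N)) (fun k => tensorEmb N n k (Dop N))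
      (fun i k => permM N n i k) where
  commute_d i hi k hk := by
    rcases eq_or_ne i k with rfl | hik
    · exact Commute.refl _
    · simp only [tensorEmb_eq_embedAt hi, tensorEmb_eq_embedAt hk]
      exact commute_embedAt_of_ne (Fin.ne_of_val_ne hik) (commute_Dop_apply N)
  d_mul_x i hi k hk hik := by
    simp only [tensorEmb_eq_embedAt hi, tensorEmb_eq_embedAt hk, permM_eq_swapAt hi hk]
    exact embedAt_mul_embedAt_eq_add_swapAt (Fin.ne_of_val_ne hik) (Dop_apply_mul_Xop_apply N)
  p_mul_d_right i hi k hk := by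
    simp only [tensorEmb_eq_embedAt hi, tensorEmb_eq_embedAt hk, permM_eq_swapAt hi hk,
      swapAt_mul_embedAt, Equiv.swap_apply_right]
  commute_p_d i hi j hj k hk hji hjk := by
    simp only [tensorEmb_eq_embedAt hj, permM_eq_swapAt hi hk]
    have := swapAt_mul_embedAt (N := N) ⟨i, hi⟩ ⟨k, hk⟩ ⟨j, hj⟩ (Dop N)
    rwa [Equiv.swap_apply_of_ne_of_ne (Fin.ne_of_val_ne hji) (Fin.ne_of_val_ne hjk)] at this

theorem universal_matrix_Capelli_glN_general (N : ℕ) (n : ℕ) :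
    ((List.range n).map (fun k =>
        tensorEmb N n k (Xop N * Dop N) - (jmM N n k).map (algebraMap ℂ (Wn N)))).prod =
    ((List.range n).map (fun k => tensorEmb N n k (Xop N))).prod *
      ((List.range n).map (fun k => tensorEmb N n k (Dop N))).prod := by
  simp only [tensorEmb_mul, map_jmM]
  exact (capelliRelations_tensorEmb N n).prod_x_mul_d_sub_sum le_rfl

/-- universal matrix Capelli identity for `U(gl_N)`: for every
`n ≥ 1`, in `Mat_N(ℂ)^{⊗n} ⊗ W_N`,
`L₁(L₂ − j₂)⋯(Lₙ − jₙ) = X₁⋯Xₙ D₁⋯Dₙ`, where `L = XD` and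
`j_k = Σ_{i=1}^{k-1} P_{ik}` (the first factor carries `j₁ = 0`). -/
theorem universal_matrix_Capelli_glN (N : ℕ) (hN : 1 ≤ N) (n : ℕ) (hn : 1 ≤ n) :
    ((List.range n).map (fun k =>
        tensorEmb N n k (Xop N * Dop N) - (jmM N n k).map (algebraMap ℂ (Wn N)))).prod =
    ((List.range n).map (fun k => tensorEmb N n k (Xop N))).prod *
      ((List.range n).map (fun k => tensorEmb N n k (Dop N))).prod :=
  universal_matrix_Capelli_glN_general N n
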